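/- Let ∑_{k=1}^∞ ψ^{p'}(k)k^{p'−2}<∞ with 1<p<∞, 1/p+1/p'=1, and suppose g_p(t)=ψ(t)t^{1/p} belongs to 𝔐₀. Then for every n∈ℕ: ψ^{p'}(n)·n^{p'−1} ≤ (p'/α̲_n(g_p))·∑_{k=n}^∞ ψ^{p'}(k)k^{p'−2}, where α̲_n(g_p)=inf_{t≥n}α(g_p;t). -/

import Mathlib

open MeasureTheory Real Filter Set

noncomputable section

/-- The `L_p` norm (1 ≤ p < ∞) of a 2π-periodic function, computed over one period. -/
def pNorm (p : ℝ) (f : ℝ → ℝ) : ℝ :=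
  (∫ t in (0:ℝ)..(2 * π), |f t| ^ p) ^ (1 / p)

/-- The essential sup norm. -/
def supNorm (f : ℝ → ℝ) : ℝ :=
  essSup (fun t => |f t|) (volume : Measure ℝ)

/-- The kernel `Ψ_β(t) = ∑_{k=1}^∞ ψ(k) cos (k t - β π / 2)`. -/
def kernelPsi (ψ : ℝ → ℝ) (β : ℝ) (t : ℝ) : ℝ :=
  ∑' k : ℕ, ψ ((k + 1 : ℕ) : ℝ) * Real.cos (((k + 1 : ℕ) : ℝ) * t - β * π / 2)

/-- 2π-periodic and integrable over a period. -/
def PeriodicIntegrable (f : ℝ → ℝ) : Prop :=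
  Function.Periodic f (2 * π) ∧ IntervalIntegrable f volume 0 (2 * π)

/-- Membership in the class `L^ψ_{β,1}`. -/
def InClassL (ψ : ℝ → ℝ) (β : ℝ) (f : ℝ → ℝ) : Prop :=
  PeriodicIntegrable f ∧
  ∃ a₀ : ℝ, ∃ φ : ℝ → ℝ,
    Function.Periodic φ (2 * π) ∧ IntervalIntegrable φ volume 0 (2 * π) ∧
    (∫ t in (-π)..π, |φ t|) ≤ 1 ∧ (∫ t in (-π)..π, φ t) = 0 ∧
    ∀ᵐ x : ℝ, f x = a₀ / 2 + (1 / π) * ∫ t in (-π)..π, kernelPsi ψ β (x - t) * φ t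

/-- The partial Fourier sum of order `m` of `f`. -/
def fourierSumR (f : ℝ → ℝ) (m : ℕ) (x : ℝ) : ℝ :=
  (1 / (2 * π)) * (∫ t in (-π)..π, f t) +
  ∑ k ∈ Finset.Icc 1 m,
    (((1 / π) * ∫ t in (-π)..π, f t * Real.cos ((k : ℝ) * t)) * Real.cos ((k : ℝ) * x) +
     ((1 / π) * ∫ t in (-π)..π, f t * Real.sin ((k : ℝ) * t)) * Real.sin ((k : ℝ) * x))

/-- Trigonometric polynomial of degree at most `m`. -/
def IsTrigPoly (m : ℕ) (g : ℝ → ℝ) : Prop :=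
  ∃ a b : ℕ → ℝ, ∀ x : ℝ,
    g x = a 0 + ∑ k ∈ Finset.Icc 1 m,
      (a k * Real.cos ((k : ℝ) * x) + b k * Real.sin ((k : ℝ) * x))

/-- `𝓔_n(L^ψ_{β,1})_s`: deviation of Fourier sums in the `L_s` metric. -/
def EFour (ψ : ℝ → ℝ) (β s : ℝ) (n : ℕ) : ℝ :=
  ⨆ f : {f : ℝ → ℝ // InClassL ψ β f},
    pNorm s (fun x => f.1 x - fourierSumR f.1 (n - 1) x)

/-- `E_n(L^ψ_{β,1})_s`: best approximation by trig polynomials of degree ≤ n-1, `L_s` metric. -/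
def EBest (ψ : ℝ → ℝ) (β s : ℝ) (n : ℕ) : ℝ :=
  ⨆ f : {f : ℝ → ℝ // InClassL ψ β f},
    ⨅ g : {g : ℝ → ℝ // IsTrigPoly (n - 1) g},
      pNorm s (fun x => f.1 x - g.1 x)

/-- `𝓔_n(L^ψ_{β,1})_∞`. -/
def EFourInf (ψ : ℝ → ℝ) (β : ℝ) (n : ℕ) : ℝ :=
  ⨆ f : {f : ℝ → ℝ // InClassL ψ β f},
    supNorm (fun x => f.1 x - fourierSumR f.1 (n - 1) x)

/-- `E_n(L^ψ_{β,1})_∞`. -/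
def EBestInf (ψ : ℝ → ℝ) (β : ℝ) (n : ℕ) : ℝ :=
  ⨆ f : {f : ℝ → ℝ // InClassL ψ β f},
    ⨅ g : {g : ℝ → ℝ // IsTrigPoly (n - 1) g},
      supNorm (fun x => f.1 x - g.1 x)

/-- The set `𝔐`: positive, continuous, convex (downward) functions on `[1,∞)` tending to 0. -/
def MemM (ψ : ℝ → ℝ) : Prop :=
  (∀ t : ℝ, 1 ≤ t → 0 < ψ t) ∧ ContinuousOn ψ (Ici (1:ℝ)) ∧ ConvexOn ℝ (Ici (1:ℝ)) ψ ∧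
  Tendsto ψ atTop (nhds 0)

/-- `α(ψ; t) = ψ(t) / (t |ψ'(t+0)|)`, with the right-hand derivative. -/
def alphaChar (ψ : ℝ → ℝ) (t : ℝ) : ℝ :=
  ψ t / (t * |derivWithin ψ (Ici t) t|)

/-- The subset `𝔐₀` of `𝔐`. -/
def MemM0 (ψ : ℝ → ℝ) : Prop :=
  MemM ψ ∧ ∃ K : ℝ, 0 < K ∧ ∀ t : ℝ, 1 ≤ t → K ≤ alphaChar ψ t

/-- The subset `𝔐_C` of `𝔐`. -/
def MemMC (ψ : ℝ → ℝ) : Prop :=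
  MemM ψ ∧ ∃ K₁ K₂ : ℝ, 0 < K₁ ∧ 0 < K₂ ∧
    ∀ t : ℝ, 1 ≤ t → K₁ ≤ alphaChar ψ t ∧ alphaChar ψ t ≤ K₂

/-- `α̲_x(g) = inf_{t ≥ x} α(g; t)`. -/
def alphaLow (g : ℝ → ℝ) (x : ℝ) : ℝ := ⨅ t : {t : ℝ // x ≤ t}, alphaChar g t.1

/-- `ᾱ_x(g) = sup_{t ≥ x} α(g; t)`. -/
def alphaUp (g : ℝ → ℝ) (x : ℝ) : ℝ := ⨆ t : {t : ℝ // x ≤ t}, alphaChar g t.1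

/-- `ξ(s) = max {4 (π/(s-1))^{1/s}, 14 (8π)^{1/s} s}`. -/
def xiConst (s : ℝ) : ℝ :=
  max (4 * (π / (s - 1)) ^ (1 / s)) (14 * (8 * π) ^ (1 / s) * s)

/-- `∑_{k=n}^∞ ψ^s(k) k^{s-2}`. -/
def tailSumPow (ψ : ℝ → ℝ) (s : ℝ) (n : ℕ) : ℝ :=
  ∑' k : ℕ, ψ ((n + k : ℕ) : ℝ) ^ s * ((n + k : ℕ) : ℝ) ^ (s - 2)

/-- `∑_{k=n}^∞ ψ(k)`. -/
def tailSum (ψ : ℝ → ℝ) (n : ℕ) : ℝ :=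
  ∑' k : ℕ, ψ ((n + k : ℕ) : ℝ)

open Topology

/-!
With `g = g_p` and `q = p'`, one has `g(t)^q = ψ(t)^q t^(q-1)`. Convexity of `g` and the bound
`α(g; t) ≥ α̲_n(g)` give `g(t) - g(t+1) ≤ |g'(t+0)| ≤ g(t) / (t α̲_n(g))` for `t ≥ n`, and the
tangent-line inequality for `x ↦ x^q` turns this into
`g(t)^q - g(t+1)^q ≤ (q / α̲_n(g)) g(t)^q / t = (q / α̲_n(g)) ψ(t)^q t^(q-2)`.
Summing over `t = n, n+1, …` telescopes to `g(n)^q`, because `g → 0`.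
-/

lemma rpow_sub_rpow_le_mul_sub {a b s : ℝ} (ha : 0 < a) (hb : 0 ≤ b) (hs : 1 ≤ s) :
    a ^ s - b ^ s ≤ s * a ^ (s - 1) * (a - b) := by
  have bernoulli := one_add_mul_self_le_rpow_one_add (s := b / a - 1)
    (by linarith [div_nonneg hb ha.le]) hs
  rw [add_sub_cancel] at bernoulli
  have hpow : a ^ s = a ^ (s - 1) * a := by
    rw [← Real.rpow_add_one ha.ne', sub_add_cancel]
  rw [Real.div_rpow hb ha.le, le_div_iff₀ (by positivity)] at bernoulli
  have key : (1 + s * (b / a - 1)) * a ^ s = a ^ s + s * a ^ (s - 1) * (b - a) := by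
    rw [hpow]; field_simp
  linarith

lemma Real.HolderConjugate.mul_rpow_one_div_rpow {p q x t : ℝ} (hpq : p.HolderConjugate q)
    (hx : 0 ≤ x) (ht : 0 ≤ t) : (x * t ^ (1 / p)) ^ q = x ^ q * t ^ (q - 1) := by
  rw [Real.mul_rpow hx (by positivity), ← Real.rpow_mul ht, one_div_mul_eq_div,
    hpq.symm.div_conj_eq_sub_one]

lemma le_alphaLow {g : ℝ → ℝ} {x K : ℝ} (h : ∀ t, x ≤ t → K ≤ alphaChar g t) :
    K ≤ alphaLow g x :=
  le_ciInf fun t => h t.1 t.2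

lemma alphaLow_le_alphaChar {g : ℝ → ℝ} {x t K : ℝ} (h : ∀ t, x ≤ t → K ≤ alphaChar g t)
    (ht : x ≤ t) : alphaLow g x ≤ alphaChar g t :=
  ciInf_le (f := fun u : {u // x ≤ u} => alphaChar g u.1)
    ⟨K, by rintro _ ⟨u, rfl⟩; exact h u.1 u.2⟩ ⟨t, ht⟩

lemma sub_le_div_of_le_alphaChar {g : ℝ → ℝ} {a t A : ℝ} (hg : ConvexOn ℝ (Ici a) g)
    (ht : a ≤ t) (ht0 : 0 < t) (hA : 0 < A) (hα : A ≤ alphaChar g t) :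
    g t - g (t + 1) ≤ g t / (t * A) := by
  rw [alphaChar] at hα
  set d := derivWithin g (Ici t) t
  -- Without a right derivative, `derivWithin` is the junk value `0` and then so is `alphaChar g t`.
  have hd : d ≠ 0 := by
    rintro hd
    simp only [hd, abs_zero, mul_zero, div_zero] at hα
    linarith
  have hdiff : DifferentiableWithinAt ℝ g (Ici t) t := by
    by_contra h
    exact hd (derivWithin_zero_of_not_differentiableWithinAt h)
  have hslope : d ≤ g (t + 1) - g t := by
    simpa [slope_def_field] using hg.le_slope_of_hasDerivWithinAt_Ioi ht
      (show a ≤ t + 1 by linarith) (lt_add_one t)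
      (hdiff.hasDerivWithinAt.mono Ioi_subset_Ici_self)
  have habs : |d| ≤ g t / (t * A) := by
    have hden : 0 < t * |d| := mul_pos ht0 (abs_pos.mpr hd)
    rw [le_div_iff₀ hden] at hα
    rw [le_div_iff₀ (mul_pos ht0 hA)]
    linarith
  linarith [neg_le_abs d]

lemma rpow_sub_rpow_succ_le_of_le_alphaChar {g : ℝ → ℝ} {a t A s : ℝ}
    (hg : ConvexOn ℝ (Ici a) g) (ht : a ≤ t) (ht0 : 0 < t) (hgt : 0 < g t)
    (hgt' : 0 ≤ g (t + 1)) (hA : 0 < A) (hα : A ≤ alphaChar g t) (hs : 1 ≤ s) :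
    g t ^ s - g (t + 1) ^ s ≤ s / A * (g t ^ s / t) :=
  calc g t ^ s - g (t + 1) ^ s ≤ s * g t ^ (s - 1) * (g t - g (t + 1)) :=
        rpow_sub_rpow_le_mul_sub hgt hgt' hs
    _ ≤ s * g t ^ (s - 1) * (g t / (t * A)) := by
        gcongr
        exact sub_le_div_of_le_alphaChar hg ht ht0 hA hα
    _ = s / A * (g t ^ s / t) := by
        rw [Real.rpow_sub_one hgt.ne']
        field_simp

lemma sub_le_tsum_of_sub_succ_le {F c : ℕ → ℝ} {l : ℝ} (hF : Tendsto F atTop (𝓝 l))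
    (hle : ∀ k, F k - F (k + 1) ≤ c k) (hc : ∀ k, 0 ≤ c k) (hsum : Summable c) :
    F 0 - l ≤ ∑' k, c k := by
  refine le_of_tendsto' (tendsto_const_nhds.sub hF) fun N => ?_
  rw [← Finset.sum_range_sub']
  exact (Finset.sum_le_sum fun k _ => hle k).trans (hsum.sum_le_tsum _ fun k _ => hc k)

lemma rpow_le_tsum_of_le_alphaChar {g : ℝ → ℝ} {a A s : ℝ} {n : ℕ}
    (hg : ConvexOn ℝ (Ici a) g) (hpos : ∀ t, a ≤ t → 0 < g t)
    (hlim : Tendsto g atTop (𝓝 0)) (ha : a ≤ n) (hn : 0 < n) (hA : 0 < A)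
    (hα : ∀ t, (n : ℝ) ≤ t → A ≤ alphaChar g t) (hs : 1 ≤ s)
    (hsum : Summable fun k : ℕ => g ((n + k : ℕ) : ℝ) ^ s / ((n + k : ℕ) : ℝ)) :
    g n ^ s ≤ s / A * ∑' k : ℕ, g ((n + k : ℕ) : ℝ) ^ s / ((n + k : ℕ) : ℝ) := by
  have hnk : ∀ k : ℕ, (n : ℝ) ≤ ((n + k : ℕ) : ℝ) := fun k => by
    exact_mod_cast n.le_add_right k
  have hpos' : ∀ k : ℕ, 0 < g ((n + k : ℕ) : ℝ) := fun k => hpos _ (ha.trans (hnk k))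
  have hlim' : Tendsto (fun k : ℕ => g ((n + k : ℕ) : ℝ) ^ s) atTop (𝓝 0) := by
    have hcast : Tendsto (fun k : ℕ => ((n + k : ℕ) : ℝ)) atTop atTop :=
      tendsto_natCast_atTop_atTop.comp
        (tendsto_atTop_mono (fun k => k.le_add_left n) tendsto_id)
    have := (hlim.comp hcast).rpow_const (Or.inr (zero_le_one.trans hs))
    rwa [Real.zero_rpow (by linarith)] at this
  have hstep : ∀ k : ℕ, g ((n + k : ℕ) : ℝ) ^ s - g ((n + (k + 1) : ℕ) : ℝ) ^ s ≤
      s / A * (g ((n + k : ℕ) : ℝ) ^ s / ((n + k : ℕ) : ℝ)) := fun k => by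
    have hsucc : ((n + (k + 1) : ℕ) : ℝ) = ((n + k : ℕ) : ℝ) + 1 := by push_cast; ring
    have hnk0 : (0 : ℝ) < ((n + k : ℕ) : ℝ) := by positivity
    rw [hsucc]
    exact rpow_sub_rpow_succ_le_of_le_alphaChar hg (ha.trans (hnk k)) hnk0 (hpos' k)
      (hpos _ (by linarith [ha.trans (hnk k)])).le hA (hα _ (hnk k)) hs
  have hnonneg : ∀ k : ℕ,
      0 ≤ s / A * (g ((n + k : ℕ) : ℝ) ^ s / ((n + k : ℕ) : ℝ)) := by
    intro k
    have := hpos' k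
    have : 0 < s := by linarith
    positivity
  simpa [tsum_mul_left] using sub_le_tsum_of_sub_succ_le hlim' hstep hnonneg (hsum.mul_left _)

/-- Lemma 2: ψ^{p'}(n) n^{p'-1} ≤ (p'/α̲_n(g_p)) ∑_{k=n}^∞ ψ^{p'}(k) k^{p'-2}. -/
theorem statement16 (ψ : ℝ → ℝ) (p p' : ℝ) (hp : 1 < p)
    (hpp' : 1 / p + 1 / p' = 1)
    (hsum : Summable (fun k : ℕ => ψ ((k + 1 : ℕ) : ℝ) ^ p' * ((k + 1 : ℕ) : ℝ) ^ (p' - 2)))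
    (hg : MemM0 (fun t => ψ t * t ^ (1 / p))) :
    ∀ n : ℕ, 1 ≤ n →
      ψ (n : ℝ) ^ p' * (n : ℝ) ^ (p' - 1) ≤
        (p' / alphaLow (fun t => ψ t * t ^ (1 / p)) (n : ℝ)) * tailSumPow ψ p' n := by
  intro n hn
  set g : ℝ → ℝ := fun t => ψ t * t ^ (1 / p)
  obtain ⟨⟨hgpos, -, hconv, hlim⟩, K, hK, hKα⟩ := hg
  have hpq : p.HolderConjugate p' := Real.holderConjugate_iff.mpr ⟨hp, by simpa using hpp'⟩
  have hn1 : (1 : ℝ) ≤ n := by exact_mod_cast hn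
  have hα : ∀ t, (n : ℝ) ≤ t → K ≤ alphaChar g t := fun t ht => hKα t (hn1.trans ht)
  have hpow : ∀ t, 1 ≤ t → g t ^ p' = ψ t ^ p' * t ^ (p' - 1) := fun t ht =>
    hpq.mul_rpow_one_div_rpow (pos_of_mul_pos_left (hgpos t ht) (by positivity)).le
      (by linarith)
  have hterm : ∀ k : ℕ, ψ ((n + k : ℕ) : ℝ) ^ p' * ((n + k : ℕ) : ℝ) ^ (p' - 2) =
      g ((n + k : ℕ) : ℝ) ^ p' / ((n + k : ℕ) : ℝ) := fun k => by
    have hnk : (1 : ℝ) ≤ ((n + k : ℕ) : ℝ) := by exact_mod_cast hn.trans (n.le_add_right k)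
    rw [hpow _ hnk, show p' - 2 = p' - 1 - 1 by ring, Real.rpow_sub_one (by positivity),
      mul_div_assoc]
  have htail :
      Summable fun k : ℕ => ψ ((n + k : ℕ) : ℝ) ^ p' * ((n + k : ℕ) : ℝ) ^ (p' - 2) :=
    ((summable_nat_add_iff (n - 1)).mpr hsum).congr fun k => by
      rw [show k + (n - 1) + 1 = n + k by omega]
  have key := rpow_le_tsum_of_le_alphaChar hconv hgpos hlim hn1 (by omega)
    (hK.trans_le (le_alphaLow hα)) (fun t ht => alphaLow_le_alphaChar hα ht) hpq.symm.lt.le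
    (htail.congr hterm)
  rwa [hpow n hn1, ← tsum_congr hterm] at key
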